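/- arXiv:math/0309477 — 7 statements merged into one kernel-verified Lean document; each statement's English description precedes it below -/
import Mathlib

section
/- Let p/q and p'/q' be rational numbers in lowest terms with p'q - pq' = 1 (so that ]p/q, p'/q'[ is a Farey interval). Then for every integer k with 1 ≤ k ≤ q + q' - 1, the open interval ]k·p/q, k·p'/q'[ contains no integer. -/
/-- Farey interval: no integer in ]k·p/q, k·p'/q'[ for 1 ≤ k ≤ q+q'-1. -/
theorem stmt_0 (p q p' q' : ℤ) (hq : 0 < q) (hq' : 0 < q')
    (hpq : Int.gcd p q = 1) (hp'q' : Int.gcd p' q' = 1)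
    (hFarey : p' * q - p * q' = 1)
    (k : ℤ) (hk1 : 1 ≤ k) (hk2 : k ≤ q + q' - 1) :
    ∀ m : ℤ, ¬ ((m : ℝ) ∈ Set.Ioo ((k : ℝ) * p / q) ((k : ℝ) * p' / q')) := by
  rintro m ⟨h1, h2⟩
  have hqR : (0 : ℝ) < (q : ℝ) := by exact_mod_cast hq
  have hq'R : (0 : ℝ) < (q' : ℝ) := by exact_mod_cast hq'
  have h1' : (k : ℝ) * p < m * q := by
    have := (div_lt_iff₀ hqR).mp h1
    linarith
  have h2' : (m : ℝ) * q' < k * p' := by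
    have := (lt_div_iff₀ hq'R).mp h2
    linarith
  have h1z : k * p < m * q := by exact_mod_cast h1'
  have h2z : m * q' < k * p' := by exact_mod_cast h2'
  have hA : 1 ≤ m * q - k * p := by omega
  have hB : 1 ≤ k * p' - m * q' := by omega
  have h3 : q' * 1 ≤ q' * (m * q - k * p) := by
    exact mul_le_mul_of_nonneg_left hA hq'.le
  have h4 : q * 1 ≤ q * (k * p' - m * q') := by
    exact mul_le_mul_of_nonneg_left hB hq.le
  have hid : q' * (m * q - k * p) + q * (k * p' - m * q') = k := by
    linear_combination k * hFarey
  omega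
end

section
/- Let ]p/q, p'/q'[ be a Farey interval. For each k in {1, …, q+q'-1} there is a unique integer n_k such that the interval ]k·(p/q) - n_k, k·(p'/q') - n_k[ is contained in ]0,1[. -/
/-- For each 1 ≤ k ≤ q+q'-1 there is a unique integer n_k with
]k·p/q - n_k, k·p'/q' - n_k[ ⊆ ]0,1[. -/
theorem stmt_2 (p q p' q' : ℤ) (hq : 0 < q) (hq' : 0 < q')
    (hpq : Int.gcd p q = 1) (hp'q' : Int.gcd p' q' = 1)
    (hFarey : p' * q - p * q' = 1)
    (k : ℤ) (hk1 : 1 ≤ k) (hk2 : k ≤ q + q' - 1) :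
    ∃! n : ℤ, Set.Ioo ((k : ℝ) * p / q - n) ((k : ℝ) * p' / q' - n) ⊆
      Set.Ioo (0 : ℝ) 1 := by
  have hqR : (0:ℝ) < q := by exact_mod_cast hq
  have hq'R : (0:ℝ) < q' := by exact_mod_cast hq'
  set a : ℝ := (k:ℝ) * p / q with ha
  set b : ℝ := (k:ℝ) * p' / q' with hb
  have hab : a < b := by
    rw [ha, hb, div_lt_div_iff₀ hqR hq'R]
    have hZ : k * p * q' < k * p' * q := by nlinarith
    exact_mod_cast hZ
  -- no integer in (a,b)
  have noint : ∀ m : ℤ, (m:ℝ) ≤ a ∨ b ≤ (m:ℝ) := by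
    intro m
    by_contra h
    push_neg at h
    obtain ⟨h1, h2⟩ := h
    have h1' : k * p < m * q := by
      have := (div_lt_iff₀ hqR).mp h1
      exact_mod_cast this
    have h2' : m * q' < k * p' := by
      have := (lt_div_iff₀ hq'R).mp h2
      exact_mod_cast this
    have e : q' * (m*q - k*p) + q * (k*p' - m*q') = k := by linear_combination k * hFarey
    have h3 : 1 ≤ m*q - k*p := by linarith
    have h4 : 1 ≤ k*p' - m*q' := by linarith
    nlinarith
  -- the gap b - a is positive and at most 1
  have hgap : b - a ≤ 1 := by
    rw [ha, hb, div_sub_div _ _ (ne_of_gt hq'R) (ne_of_gt hqR), div_le_one (by positivity)]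
    have hZ : k * p' * q - k * p * q' ≤ q * q' := by nlinarith
    have hZR : (k:ℝ)*p'*q - k*p*q' ≤ q*q' := by exact_mod_cast hZ
    nlinarith [hZR]
  refine ⟨⌊a⌋, ?_, ?_⟩
  · intro x hx
    obtain ⟨hx1, hx2⟩ := hx
    constructor
    · have : (⌊a⌋ : ℝ) ≤ a := Int.floor_le a
      linarith
    · have hble : b ≤ (⌊a⌋ : ℝ) + 1 := by
        rcases noint (⌊a⌋ + 1) with h | h
        · exfalso
          have := Int.lt_floor_add_one a
          push_cast at h
          linarith
        · push_cast at h; linarith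
      linarith
  · intro m hm
    rw [Set.Ioo_subset_Ioo_iff (by linarith : a - (m:ℝ) < b - m)] at hm
    obtain ⟨h1, h2⟩ := hm
    have hf1 : (⌊a⌋ : ℝ) ≤ a := Int.floor_le a
    have hf2 : a < (⌊a⌋ : ℝ) + 1 := Int.lt_floor_add_one a
    have : (m : ℝ) = ⌊a⌋ := by
      have hm1 : (m:ℝ) ≤ a := by linarith
      have hm2 : a - 1 < (m:ℝ) := by linarith
      have : m = ⌊a⌋ := by
        have h1' : m ≤ ⌊a⌋ := Int.le_floor.mpr hm1
        have h2' : ⌊a⌋ ≤ m := by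
          by_contra hcon
          push_neg at hcon
          have : (m:ℝ) + 1 ≤ (⌊a⌋:ℝ) := by exact_mod_cast hcon
          linarith
        omega
      exact_mod_cast this
    exact_mod_cast this
end

section
/- Let ]p/q, p'/q'[ be a Farey interval, and for 1 ≤ k ≤ q+q'-1 let n_k be the unique integer with ]k·p/q - n_k, k·p'/q' - n_k[ ⊆ ]0,1[. For α ∈ ]p/q, p'/q'[ set α_k := kα - n_k ∈ ]0,1[. Then for any two distinct indices k₁, k₂ in {1,…,q+q'-1} and any two α, β in ]p/q, p'/q'[, one has α_{k₁} < α_{k₂} if and only if β_{k₁} < β_{k₂}; that is, the ordering of (α_1, …, α_{q+q'-1}) in ]0,1[ does not depend on the choice of α in the Farey interval. -/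
/-- The order of the numbers α_k = kα - n_k in ]0,1[ does not depend on the
choice of α in the Farey interval. -/
theorem stmt_3 (p q p' q' : ℤ) (hq : 0 < q) (hq' : 0 < q')
    (hpq : Int.gcd p q = 1) (hp'q' : Int.gcd p' q' = 1)
    (hFarey : p' * q - p * q' = 1)
    (n : ℤ → ℤ)
    (hn : ∀ k : ℤ, 1 ≤ k → k ≤ q + q' - 1 →
      Set.Ioo ((k : ℝ) * p / q - n k) ((k : ℝ) * p' / q' - n k) ⊆
        Set.Ioo (0 : ℝ) 1)
    (k₁ k₂ : ℤ) (hk₁ : 1 ≤ k₁) (hk₁' : k₁ ≤ q + q' - 1)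
    (hk₂ : 1 ≤ k₂) (hk₂' : k₂ ≤ q + q' - 1) (hne : k₁ ≠ k₂)
    (α β : ℝ) (hα : α ∈ Set.Ioo ((p : ℝ) / q) ((p' : ℝ) / q'))
    (hβ : β ∈ Set.Ioo ((p : ℝ) / q) ((p' : ℝ) / q')) :
    ((k₁ : ℝ) * α - n k₁ < (k₂ : ℝ) * α - n k₂ ↔
      (k₁ : ℝ) * β - n k₁ < (k₂ : ℝ) * β - n k₂) := by
  obtain ⟨hα1, hα2⟩ := hα
  obtain ⟨hβ1, hβ2⟩ := hβ
  have hqR : (0:ℝ) < q := by exact_mod_cast hq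
  have hq'R : (0:ℝ) < q' := by exact_mod_cast hq'
  set m : ℤ := k₂ - k₁ with hm
  set c : ℤ := n k₂ - n k₁ with hc
  have hm0 : m ≠ 0 := sub_ne_zero.mpr (Ne.symm hne)
  have hmR0 : (m:ℝ) ≠ 0 := Int.cast_ne_zero.mpr hm0
  -- any rational a/b strictly inside the Farey interval has denominator ≥ q+q'
  have main : ∀ a b : ℤ, 0 < b → (p:ℝ)/q < (a:ℝ)/b → (a:ℝ)/b < (p':ℝ)/q' →
      q + q' ≤ b := by
    intro a b hb h1 h2
    have hbR : (0:ℝ) < b := by exact_mod_cast hb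
    have h1' : p * b < a * q := by
      have := (div_lt_div_iff₀ hqR hbR).mp h1
      exact_mod_cast this
    have h2' : a * q' < p' * b := by
      have := (div_lt_div_iff₀ hbR hq'R).mp h2
      exact_mod_cast this
    have e1 : q * 1 ≤ q * (p' * b - a * q') :=
      mul_le_mul_of_nonneg_left (by omega) hq.le
    have e2 : q' * 1 ≤ q' * (a * q - p * b) :=
      mul_le_mul_of_nonneg_left (by omega) hq'.le
    have e3 : q * (p' * b - a * q') + q' * (a * q - p * b) = b := by
      linear_combination b * hFarey
    linarith
  -- the affine function m*x - c has no zero inside the interval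
  have key : ∀ x : ℝ, (p:ℝ)/q < x → x < (p':ℝ)/q' → (m:ℝ) * x ≠ c := by
    intro x h1 h2 hx
    have hxv : x = (c:ℝ) / (m:ℝ) := by field_simp; linarith
    rcases hm0.lt_or_gt with hneg | hpos
    · have hb : 0 < -m := by omega
      have hxv' : x = ((-c : ℤ):ℝ) / ((-m : ℤ):ℝ) := by
        push_cast; rw [neg_div_neg_eq]; exact hxv
      rw [hxv'] at h1 h2
      have := main (-c) (-m) hb h1 h2
      omega
    · rw [hxv] at h1 h2
      have := main c m hpos h1 h2
      omega
  -- hence the sign of m*x - c is constant on the interval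
  have same : ∀ x y : ℝ, (p:ℝ)/q < x → x < (p':ℝ)/q' → (p:ℝ)/q < y →
      y < (p':ℝ)/q' → (c:ℝ) < m * x → (c:ℝ) < m * y := by
    intro x y hx1 hx2 hy1 hy2 hxc
    by_contra h
    have hy : (m:ℝ) * y < c := lt_of_le_of_ne (not_lt.mp h) (key y hy1 hy2)
    have hcm : (m:ℝ) * ((c:ℝ)/m) = c := by field_simp
    rcases hm0.lt_or_gt with hneg | hpos
    · have hmR : (m:ℝ) < 0 := by exact_mod_cast hneg
      have hx0 : x < (c:ℝ)/m := by rw [lt_div_iff_of_neg hmR]; linarith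
      have hy0 : (c:ℝ)/m < y := by rw [div_lt_iff_of_neg hmR]; linarith
      exact key _ (lt_trans hx1 hx0) (lt_trans hy0 hy2) hcm
    · have hmR : (0:ℝ) < m := by exact_mod_cast hpos
      have hy0 : y < (c:ℝ)/m := by rw [lt_div_iff₀ hmR]; linarith
      have hx0 : (c:ℝ)/m < x := by rw [div_lt_iff₀ hmR]; linarith
      exact key _ (lt_trans hy1 hy0) (lt_trans hx0 hx2) hcm
  have conv : ∀ x : ℝ, ((k₁:ℝ) * x - n k₁ < (k₂:ℝ) * x - n k₂) ↔
      (c:ℝ) < (m:ℝ) * x := by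
    intro x
    rw [hm, hc]
    push_cast
    constructor <;> intro <;> linarith
  rw [conv α, conv β]
  exact ⟨same α β hα1 hα2 hβ1 hβ2, same β α hβ1 hβ2 hα1 hα2⟩
end

section
/- Let ]p/q, p'/q'[ be a Farey interval and let k₁ ≠ k₂ be two integers in {1, …, q+q'-1}. Then for every α in ]p/q, p'/q'[, the number (k₂ - k₁)·α - (n_{k₂} - n_{k₁}) is nonzero, where n_k denotes the integer part datum with kα - n_k ∈ ]0,1[. -/
/-- For distinct k₁ ≠ k₂ in {1,…,q+q'-1} and α in a Farey interval,
(k₂-k₁)·α - (n_{k₂} - n_{k₁}) ≠ 0. -/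
theorem stmt_4 (p q p' q' : ℤ) (hq : 0 < q) (hq' : 0 < q')
    (hpq : Int.gcd p q = 1) (hp'q' : Int.gcd p' q' = 1)
    (hFarey : p' * q - p * q' = 1)
    (α : ℝ) (hα : α ∈ Set.Ioo ((p : ℝ) / q) ((p' : ℝ) / q'))
    (n : ℤ → ℤ)
    (hn : ∀ k : ℤ, 1 ≤ k → k ≤ q + q' - 1 →
      (k : ℝ) * α - n k ∈ Set.Ioo (0 : ℝ) 1)
    (k₁ k₂ : ℤ) (hk₁ : 1 ≤ k₁) (hk₁' : k₁ ≤ q + q' - 1)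
    (hk₂ : 1 ≤ k₂) (hk₂' : k₂ ≤ q + q' - 1) (hne : k₁ ≠ k₂) :
    ((k₂ : ℝ) - k₁) * α - ((n k₂ : ℝ) - n k₁) ≠ 0 := by
  intro h
  obtain ⟨h1, h2⟩ := hα
  set d : ℤ := k₂ - k₁ with hd
  set m : ℤ := n k₂ - n k₁ with hm
  have hd0 : d ≠ 0 := sub_ne_zero.mpr (Ne.symm hne)
  have hmα : (m : ℝ) = (d : ℝ) * α := by rw [hm, hd]; push_cast; linarith
  have hqR : (0:ℝ) < (q:ℝ) := by exact_mod_cast hq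
  have hq'R : (0:ℝ) < (q':ℝ) := by exact_mod_cast hq'
  have hpos1 : (0:ℝ) < (q:ℝ) * α - p := by
    have := (div_lt_iff₀ hqR).mp h1; linarith
  have hpos2 : (0:ℝ) < (p':ℝ) - (q':ℝ) * α := by
    have := (lt_div_iff₀ hq'R).mp h2; linarith
  -- integer quantities
  have hA : ((m * q - p * d : ℤ) : ℝ) = (d : ℝ) * ((q:ℝ) * α - p) := by
    push_cast; nlinarith [hmα]
  have hB : ((p' * d - m * q' : ℤ) : ℝ) = (d : ℝ) * ((p':ℝ) - (q':ℝ) * α) := by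
    push_cast; nlinarith [hmα]
  have hdbound : d ≤ q + q' - 2 ∧ -(q + q' - 2) ≤ d := by omega
  have hsum : q' * (m * q - p * d) + q * (p' * d - m * q') = d := by
    have : q' * (m * q - p * d) + q * (p' * d - m * q') = d * (p' * q - p * q') := by ring
    rw [this, hFarey, mul_one]
  rcases lt_or_gt_of_ne hd0 with hdlt | hdgt
  · have hdR : (d : ℝ) < 0 := by exact_mod_cast hdlt
    have hA' : ((m * q - p * d : ℤ) : ℝ) < 0 := by rw [hA]; exact mul_neg_of_neg_of_pos hdR hpos1
    have hB' : ((p' * d - m * q' : ℤ) : ℝ) < 0 := by rw [hB]; exact mul_neg_of_neg_of_pos hdR hpos2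
    have hAi : m * q - p * d ≤ -1 := by
      have : m * q - p * d < 0 := by exact_mod_cast hA'
      omega
    have hBi : p' * d - m * q' ≤ -1 := by
      have : p' * d - m * q' < 0 := by exact_mod_cast hB'
      omega
    nlinarith [hdbound.2, hsum, mul_le_mul_of_nonneg_left hAi hq'.le,
      mul_le_mul_of_nonneg_left hBi hq.le]
  · have hdR : (0:ℝ) < (d : ℝ) := by exact_mod_cast hdgt
    have hA' : (0:ℝ) < ((m * q - p * d : ℤ) : ℝ) := by rw [hA]; exact mul_pos hdR hpos1
    have hB' : (0:ℝ) < ((p' * d - m * q' : ℤ) : ℝ) := by rw [hB]; exact mul_pos hdR hpos2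
    have hAi : 1 ≤ m * q - p * d := by
      have : 0 < m * q - p * d := by exact_mod_cast hA'
      omega
    have hBi : 1 ≤ p' * d - m * q' := by
      have : 0 < p' * d - m * q' := by exact_mod_cast hB'
      omega
    nlinarith [hdbound.1, hsum, mul_le_mul_of_nonneg_left hAi hq'.le,
      mul_le_mul_of_nonneg_left hBi hq.le]
end

section
/- For every ε > 0, every orientation-preserving (increasing) homeomorphism h of the interval [0,1] fixing the endpoints can be written as a composition h = h_N ∘ ⋯ ∘ h₁ of N increasing homeomorphisms of [0,1], each fixing the endpoints and each satisfying sup_{x ∈ [0,1]} |h_i(x) - x| < ε, where N can be chosen with N ≤ 1/ε + 1. -/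
noncomputable section StmtEight

open Set

namespace StmtEight

abbrev II := Set.Icc (0:ℝ) 1

instance : Fact ((0:ℝ) ≤ 1) := ⟨zero_le_one⟩

def z0 : II := ⟨0, by constructor <;> norm_num⟩
def z1 : II := ⟨1, by constructor <;> norm_num⟩

lemma h_fix0 (h : II ≃ₜ II) (hm : StrictMono h) : h z0 = z0 := by
  obtain ⟨w, hw⟩ := h.surjective z0
  have hle : z0 ≤ w := Subtype.mk_le_mk.2 w.2.1
  rcases eq_or_lt_of_le hle with heq | hlt
  · rw [← heq] at hw; exact hw
  · exfalso
    have h3 := hm hlt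
    rw [hw] at h3
    have h2 : z0 ≤ h z0 := Subtype.mk_le_mk.2 (h z0).2.1
    exact absurd (lt_of_le_of_lt h2 h3) (lt_irrefl _)

lemma h_fix1 (h : II ≃ₜ II) (hm : StrictMono h) : h z1 = z1 := by
  obtain ⟨w, hw⟩ := h.surjective z1
  have hle : w ≤ z1 := Subtype.mk_le_mk.2 w.2.2
  rcases eq_or_lt_of_le hle with heq | hlt
  · rw [heq] at hw; exact hw
  · exfalso
    have h3 := hm hlt
    rw [hw] at h3
    have h2 : h z1 ≤ z1 := Subtype.mk_le_mk.2 (h z1).2.2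
    exact absurd (lt_of_lt_of_le h3 h2) (lt_irrefl _)

/-- key pointwise bound: `|h y - y| < 1` for all `y`. -/
lemma h_dist_lt_one (h : II ≃ₜ II) (hm : StrictMono h) (y : II) :
    |((h y : ℝ)) - (y : ℝ)| < 1 := by
  rcases eq_or_lt_of_le y.2.1 with h0 | h0
  · have hy : y = z0 := Subtype.ext h0.symm
    rw [hy, h_fix0 h hm]; simp [z0]
  rcases eq_or_lt_of_le y.2.2 with h1 | h1
  · have hy : y = z1 := Subtype.ext h1
    rw [hy, h_fix1 h hm]; simp [z1]
  · have hb : z0 < y := Subtype.mk_lt_mk.2 h0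
    have ht : y < z1 := Subtype.mk_lt_mk.2 h1
    have hb' : (0:ℝ) < (h y : ℝ) := by
      have h4 := hm hb; rw [h_fix0 h hm] at h4; exact h4
    have ht' : ((h y : ℝ)) < 1 := by
      have h4 := hm ht; rw [h_fix1 h hm] at h4; exact h4
    rw [abs_sub_lt_iff]
    constructor <;> nlinarith [y.2.1, y.2.2]

def phiMap (h : II ≃ₜ II) (t : ℝ) (ht0 : 0 ≤ t) (ht1 : t ≤ 1) (x : II) : II :=
  ⟨(1 - t) * (x : ℝ) + t * ((h x : ℝ)),
    ⟨by nlinarith [x.2.1, x.2.2, (h x).2.1, (h x).2.2],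
     by nlinarith [x.2.1, x.2.2, (h x).2.1, (h x).2.2]⟩⟩

lemma phiMap_coe (h : II ≃ₜ II) (t : ℝ) (ht0 : 0 ≤ t) (ht1 : t ≤ 1) (x : II) :
    ((phiMap h t ht0 ht1 x : ℝ)) = (1 - t) * (x : ℝ) + t * ((h x : ℝ)) := rfl

lemma phiMap_strictMono (h : II ≃ₜ II) (hm : StrictMono h) (t : ℝ)
    (ht0 : 0 ≤ t) (ht1 : t ≤ 1) : StrictMono (phiMap h t ht0 ht1) := by
  intro a b hab
  have h1 : (a : ℝ) < (b : ℝ) := hab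
  have h2 : ((h a : ℝ)) < ((h b : ℝ)) := hm hab
  have goal : ((1 - t) * (a : ℝ) + t * ((h a : ℝ)) : ℝ) <
      (1 - t) * (b : ℝ) + t * ((h b : ℝ)) := by
    rcases eq_or_lt_of_le ht0 with h0 | h0
    · rw [← h0]; simpa using h1
    · nlinarith [mul_pos h0 (sub_pos.2 h2), mul_nonneg (sub_nonneg.2 ht1)
        (le_of_lt (sub_pos.2 h1))]
  exact Subtype.mk_lt_mk.2 goal

lemma phiMap_continuous (h : II ≃ₜ II) (t : ℝ) (ht0 : 0 ≤ t) (ht1 : t ≤ 1) :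
    Continuous (phiMap h t ht0 ht1) := by
  apply Continuous.subtype_mk
  exact (continuous_const.mul continuous_subtype_val).add
    (continuous_const.mul (continuous_subtype_val.comp h.continuous))

lemma phiMap_fix0 (h : II ≃ₜ II) (hm : StrictMono h) (t : ℝ)
    (ht0 : 0 ≤ t) (ht1 : t ≤ 1) : phiMap h t ht0 ht1 z0 = z0 := by
  apply Subtype.ext
  rw [phiMap_coe, h_fix0 h hm]
  simp [z0]

lemma phiMap_fix1 (h : II ≃ₜ II) (hm : StrictMono h) (t : ℝ)
    (ht0 : 0 ≤ t) (ht1 : t ≤ 1) : phiMap h t ht0 ht1 z1 = z1 := by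
  apply Subtype.ext
  rw [phiMap_coe, h_fix1 h hm]
  show (1 - t) * ((z1:II) : ℝ) + t * ((z1:II) : ℝ) = ((z1:II) : ℝ)
  ring

lemma phiMap_surjective (h : II ≃ₜ II) (hm : StrictMono h) (t : ℝ)
    (ht0 : 0 ≤ t) (ht1 : t ≤ 1) : Function.Surjective (phiMap h t ht0 ht1) := by
  haveI : PreconnectedSpace II := Subtype.preconnectedSpace isPreconnected_Icc
  intro y
  have key := intermediate_value_univ (α := II) z0 z1 (phiMap_continuous h t ht0 ht1)
  apply key
  rw [phiMap_fix0 h hm t ht0 ht1, phiMap_fix1 h hm t ht0 ht1]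
  exact ⟨Subtype.mk_le_mk.2 y.2.1, Subtype.mk_le_mk.2 y.2.2⟩

def phiIso (h : II ≃ₜ II) (hm : StrictMono h) (t : ℝ)
    (ht0 : 0 ≤ t) (ht1 : t ≤ 1) : II ≃o II :=
  StrictMono.orderIsoOfSurjective _ (phiMap_strictMono h hm t ht0 ht1)
    (phiMap_surjective h hm t ht0 ht1)

def phiHomeo (h : II ≃ₜ II) (hm : StrictMono h) (t : ℝ)
    (ht0 : 0 ≤ t) (ht1 : t ≤ 1) : II ≃ₜ II :=
  (phiIso h hm t ht0 ht1).toHomeomorph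

@[simp] lemma phiHomeo_apply (h : II ≃ₜ II) (hm : StrictMono h) (t : ℝ)
    (ht0 : 0 ≤ t) (ht1 : t ≤ 1) (x : II) :
    phiHomeo h hm t ht0 ht1 x = phiMap h t ht0 ht1 x := rfl

/-- telescoping of the fold -/
lemma foldl_tele {α : Type*} (F G : ℕ → α → α)
    (hGF : ∀ n x, G n (F n x) = x) (hFG : ∀ n x, F n (G n x) = x) :
    ∀ n, List.foldl (fun acc f => f ∘ acc) id
        (List.ofFn (fun i : Fin n => F (i+1) ∘ G i))
      = F n ∘ G 0 := by
  intro n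
  induction n with
  | zero =>
      simp only [List.ofFn_zero, List.foldl_nil]
      funext x
      simp [hFG]
  | succ n ih =>
      rw [List.ofFn_succ']
      simp only [Fin.coe_castSucc, Fin.val_last]
      rw [List.concat_eq_append, List.foldl_append, List.foldl_cons, List.foldl_nil, ih]
      funext x
      simp [hGF]

end StmtEight

end StmtEight

open StmtEight in
/-- Every increasing homeomorphism of [0,1] is a composition of N increasing
homeomorphisms that are ε-close to the identity, with N ≤ 1/ε + 1. -/
theorem stmt_8 (ε : ℝ) (hε : 0 < ε) :
    ∃ N : ℕ, (N : ℝ) ≤ 1 / ε + 1 ∧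
      ∀ h : (Set.Icc (0:ℝ) 1) ≃ₜ (Set.Icc (0:ℝ) 1), StrictMono h →
        ∃ g : Fin N → ((Set.Icc (0:ℝ) 1) ≃ₜ (Set.Icc (0:ℝ) 1)),
          (∀ i, StrictMono (g i) ∧ ∀ x : Set.Icc (0:ℝ) 1,
            |((g i x : ℝ)) - (x : ℝ)| < ε) ∧
          ⇑h = (List.ofFn fun i => ⇑(g i)).foldl (fun acc f => f ∘ acc) id := by
  set N : ℕ := ⌈1/ε⌉₊ with hN
  have hNpos : 0 < N := Nat.ceil_pos.2 (by positivity)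
  have hNR : (0:ℝ) < N := by exact_mod_cast hNpos
  have hNle : (N : ℝ) ≤ 1 / ε + 1 := le_of_lt (Nat.ceil_lt_add_one (by positivity))
  have hNinv : 1 / (N:ℝ) ≤ ε := by
    rw [div_le_iff₀ hNR]
    have h5 : 1/ε ≤ (N:ℝ) := Nat.le_ceil _
    calc (1:ℝ) = ε * (1/ε) := by field_simp
    _ ≤ ε * N := by apply mul_le_mul_of_nonneg_left h5 (le_of_lt hε)
  refine ⟨N, hNle, ?_⟩
  intro h hm
  have ht0 : ∀ k : ℕ, (0:ℝ) ≤ min ((k:ℝ)/N) 1 :=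
    fun k => le_min (by positivity) zero_le_one
  have ht1 : ∀ k : ℕ, min ((k:ℝ)/N) 1 ≤ 1 := fun k => min_le_right _ _
  set F : ℕ → (II ≃ₜ II) := fun k => phiHomeo h hm _ (ht0 k) (ht1 k) with hF
  set g : Fin N → (II ≃ₜ II) := fun i => ((F i).symm.trans (F (i+1))) with hg
  have hmin : ∀ k : ℕ, k ≤ N → min ((k:ℝ)/N) 1 = (k:ℝ)/N := by
    intro k hk
    apply min_eq_left
    rw [div_le_one hNR]
    exact_mod_cast hk
  refine ⟨g, ?_, ?_⟩
  · intro i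
    constructor
    · -- strict mono
      intro a b hab
      exact phiMap_strictMono h hm _ (ht0 (i+1)) (ht1 (i+1))
        ((phiIso h hm _ (ht0 i) (ht1 i)).symm.strictMono hab)
    · intro x
      set y : II := (F i).symm x with hy
      have hxy : x = F i y := ((F i).apply_symm_apply x).symm
      have hgx : g i x = F (i+1) y := rfl
      have hix : (i:ℕ) ≤ N := le_of_lt i.2
      have hi1 : ((i:ℕ)+1) ≤ N := i.2
      have e1 : ((F (i+1) y : ℝ)) =
          (1 - ((i:ℝ)+1)/N) * (y:ℝ) + (((i:ℝ)+1)/N) * ((h y : ℝ)) := by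
        have e1' : ((F (i+1)) y : ℝ) =
            (phiMap h _ (ht0 ((i:ℕ)+1)) (ht1 ((i:ℕ)+1)) y : ℝ) := rfl
        rw [e1', phiMap_coe, hmin ((i:ℕ)+1) hi1]
        push_cast
        ring
      have e2 : ((x : ℝ)) = (1 - (i:ℝ)/N) * (y:ℝ) + ((i:ℝ)/N) * ((h y : ℝ)) := by
        rw [hxy]
        have e2' : ((F i) y : ℝ) = (phiMap h _ (ht0 i) (ht1 i) y : ℝ) := rfl
        rw [e2', phiMap_coe, hmin i hix]
      rw [hgx, e1, e2]
      have key : (1 - ((i:ℝ)+1)/N) * (y:ℝ) + (((i:ℝ)+1)/N) * ((h y : ℝ))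
          - ((1 - (i:ℝ)/N) * (y:ℝ) + ((i:ℝ)/N) * ((h y : ℝ)))
          = (1/N) * (((h y : ℝ)) - (y:ℝ)) := by
        field_simp
        ring
      rw [key, abs_mul, abs_of_pos (by positivity : (0:ℝ) < 1/(N:ℝ))]
      have hd := h_dist_lt_one h hm y
      calc (1/(N:ℝ)) * |((h y : ℝ)) - (y:ℝ)| < (1/(N:ℝ)) * 1 := by
            apply mul_lt_mul_of_pos_left hd (by positivity)
        _ = 1/(N:ℝ) := mul_one _
        _ ≤ ε := hNinv
  · -- telescoping
    have hgf : (fun i : Fin N => ⇑(g i)) = fun i : Fin N =>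
        (fun k : ℕ => ⇑(F k)) ((i:ℕ)+1) ∘ (fun k : ℕ => ⇑(F k).symm) i := by
      funext i; rfl
    rw [hgf, foldl_tele (fun k : ℕ => ⇑(F k)) (fun k : ℕ => ⇑(F k).symm)
      (by exact fun n x => (F n).symm_apply_apply x)
      (by exact fun n x => (F n).apply_symm_apply x) N]
    have hFN : ⇑(F N) = ⇑h := by
      funext x
      have hm1 : min ((N:ℝ)/N) 1 = 1 := by rw [hmin N le_rfl]; field_simp
      apply Subtype.ext
      have : ((F N) x : ℝ) = (phiMap h _ (ht0 N) (ht1 N) x : ℝ) := rfl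
      rw [this, phiMap_coe, hm1]
      ring
    have hF0 : ⇑(F 0).symm = id := by
      funext x
      simp only [id_eq]
      apply (F 0).injective
      rw [(F 0).apply_symm_apply]
      apply Subtype.ext
      have : ((F 0) x : ℝ) = (phiMap h _ (ht0 0) (ht1 0) x : ℝ) := rfl
      rw [this, phiMap_coe]
      have hm0 : min (((0:ℕ):ℝ)/(N:ℝ)) 1 = 0 := by
        rw [Nat.cast_zero, zero_div]
        exact min_eq_left zero_le_one
      rw [hm0]
      ring
    rw [hFN, hF0]
    funext x
    rfl
end

section
/- For every ε > 0, there exists N ∈ ℕ with N ≤ 4/ε + 4 such that every homeomorphism h of the closed unit disc 𝔻 ⊂ ℝ² that restricts to the identity on the boundary circle ∂𝔻 can be written as a product h = h_N ∘ ⋯ ∘ h₁ of N homeomorphisms of 𝔻, each equal to the identity on ∂𝔻 and each satisfying sup_{x ∈ 𝔻} d(h_i(x), x) < ε. -/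
/-!
Fix `m > 1 / ε`, a radius `t < 1` close to `1` and `a < ε / 2`. A radial homeomorphism `F` of the
disc, fixing the boundary, squeezes the disc of radius `t` into the disc of radius `a`;
interpolating radially between the identity and `F` in `m` equal steps writes both `F` and `F⁻¹`
as products of `m` maps moving points by at most `1 / m < ε`. Alexander's trick conjugates `h` by
the scaling `x ↦ t • x` into a homeomorphism `k` supported in the disc of radius `t`. By uniform
continuity of `h`, `h ∘ k⁻¹` is `ε`-small once `t` is close to `1`, and `F ∘ k ∘ F⁻¹`, supported
in the disc of radius `a`, moves points by at most `2 a < ε`. Hence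
`h = (h ∘ k⁻¹) ∘ F⁻¹ ∘ (F ∘ k ∘ F⁻¹) ∘ F` is a product of `2 m + 2` small factors.
-/

open Metric Set

section Factorization

variable {X : Type*} [PseudoMetricSpace X] (S : Set X) (ε : ℝ)

/-- `h = g (N - 1) ∘ ⋯ ∘ g 0`. -/
def FactorsIntoSmall (N : ℕ) (h : X ≃ₜ X) : Prop :=
  ∃ g : Fin N → X ≃ₜ X, (∀ i, (∀ x ∈ S, g i x = x) ∧ ∀ x, dist (g i x) x < ε) ∧
    ⇑h = (List.ofFn fun i => ⇑(g i)).foldl (fun acc f => f ∘ acc) id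

variable {S ε}

lemma foldl_comp_eq_comp {α : Type*} (l : List (α → α)) (a : α → α) :
    l.foldl (fun acc f => f ∘ acc) a = l.foldl (fun acc f => f ∘ acc) id ∘ a := by
  induction l generalizing a with
  | nil => rfl
  | cons f l ih => rw [List.foldl_cons, List.foldl_cons, ih, ih (f ∘ id)]; rfl

lemma factorsIntoSmall_zero : FactorsIntoSmall S ε 0 (Homeomorph.refl X) :=
  ⟨Fin.elim0, fun i => i.elim0, rfl⟩

lemma factorsIntoSmall_one {g : X ≃ₜ X} (hS : ∀ x ∈ S, g x = x) (hg : ∀ x, dist (g x) x < ε) :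
    FactorsIntoSmall S ε 1 g :=
  ⟨fun _ => g, fun _ => ⟨hS, hg⟩, rfl⟩

lemma FactorsIntoSmall.trans {N M : ℕ} {a b : X ≃ₜ X} (ha : FactorsIntoSmall S ε N a)
    (hb : FactorsIntoSmall S ε M b) : FactorsIntoSmall S ε (N + M) (a.trans b) := by
  obtain ⟨ga, hga, ha⟩ := ha
  obtain ⟨gb, hgb, hb⟩ := hb
  refine ⟨Fin.append ga gb, fun i => ?_, ?_⟩
  · refine Fin.addCases (fun i => ?_) (fun i => ?_) i
    · simpa using hga i
    · simpa using hgb i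
  · have : (fun i => ⇑(Fin.append ga gb i)) = Fin.append (fun i => ⇑(ga i)) (fun i => ⇑(gb i)) :=
      funext fun i => Fin.addCases (fun i => by simp) (fun i => by simp) i
    rw [this, List.ofFn_fin_append, List.foldl_append, foldl_comp_eq_comp _ (List.foldl _ _ _),
      ← ha, ← hb]
    rfl

lemma factorsIntoSmall_symm_trans {f g : X ≃ₜ X} (hf : ∀ x ∈ S, f x = x)
    (hg : ∀ x ∈ S, g x = x) (hfg : ∀ x, dist (g x) (f x) < ε) :
    FactorsIntoSmall S ε 1 (f.symm.trans g) := by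
  refine factorsIntoSmall_one (fun x hx => ?_) (fun x => ?_)
  · rw [Homeomorph.trans_apply, f.symm_apply_eq.mpr (hf x hx).symm, hg x hx]
  · simpa using hfg (f.symm x)

lemma factorsIntoSmall_of_chain {n : ℕ} (e : Fin (n + 1) → X ≃ₜ X) (hS : ∀ i, ∀ x ∈ S, e i x = x)
    (he : ∀ (i : Fin n) x, dist (e i.succ x) (e i.castSucc x) < ε) :
    FactorsIntoSmall S ε n ((e 0).symm.trans (e (Fin.last n))) := by
  induction n with
  | zero => simpa using factorsIntoSmall_zero
  | succ n ih =>
    have := (ih (fun i => e i.castSucc) (fun i => hS _) (fun i => he i.castSucc)).trans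
      (factorsIntoSmall_symm_trans (hS (Fin.last n).castSucc) (hS (Fin.last (n + 1)))
        (he (Fin.last n)))
    convert this using 1
    ext
    simp

end Factorization

variable {V : Type*} [NormedAddCommGroup V] [NormedSpace ℝ V]

local notation "𝔹" => closedBall (0 : V) 1

omit [NormedSpace ℝ V] in
lemma norm_coe_le_one (x : 𝔹) : ‖(x : V)‖ ≤ 1 := mem_closedBall_zero_iff.mp x.2

omit [NormedSpace ℝ V] in
lemma norm_coe_mem_Icc (x : 𝔹) : ‖(x : V)‖ ∈ Icc (0 : ℝ) 1 := ⟨norm_nonneg _, norm_coe_le_one x⟩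

variable (V) in
def ballBoundary : Set (closedBall (0 : V) 1) := {x | ‖(x : V)‖ = 1}

/-- `ν` is the profile of the radial homeomorphism `x ↦ ν ‖x‖ • x` of the closed unit ball. -/
structure IsRadialProfile (ν : ℝ → ℝ) : Prop where
  continuous : Continuous ν
  pos : ∀ r ∈ Icc (0 : ℝ) 1, 0 < ν r
  monotoneOn : MonotoneOn ν (Icc 0 1)
  map_one : ν 1 = 1

namespace IsRadialProfile

variable {ν : ℝ → ℝ} (hν : IsRadialProfile ν)
include hν

lemma le_one {r : ℝ} (hr : r ∈ Icc (0 : ℝ) 1) : ν r ≤ 1 :=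
  hν.map_one ▸ hν.monotoneOn hr (right_mem_Icc.mpr zero_le_one) hr.2

lemma strictMonoOn_mul_self : StrictMonoOn (fun r => r * ν r) (Icc 0 1) := fun r hr s hs hrs =>
  calc r * ν r < s * ν r := mul_lt_mul_of_pos_right hrs (hν.pos r hr)
    _ ≤ s * ν s := mul_le_mul_of_nonneg_left (hν.monotoneOn hr hs hrs.le) hs.1

lemma norm_smul_self (x : 𝔹) : ‖ν ‖(x : V)‖ • (x : V)‖ = ‖(x : V)‖ * ν ‖(x : V)‖ := by
  rw [norm_smul, Real.norm_of_nonneg (hν.pos _ (norm_coe_mem_Icc x)).le, mul_comm]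

variable (V) in
def map (x : 𝔹) : 𝔹 :=
  ⟨ν ‖(x : V)‖ • (x : V), mem_closedBall_zero_iff.mpr <| by
    rw [hν.norm_smul_self]
    exact mul_le_one₀ (norm_coe_le_one x) (hν.pos _ (norm_coe_mem_Icc x)).le
      (hν.le_one (norm_coe_mem_Icc x))⟩

lemma map_injective : Function.Injective (hν.map V) := by
  intro x y hxy
  have hxy : ν ‖(x : V)‖ • (x : V) = ν ‖(y : V)‖ • (y : V) := congrArg Subtype.val hxy
  have hnorm : ‖(x : V)‖ = ‖(y : V)‖ :=
    hν.strictMonoOn_mul_self.injOn (norm_coe_mem_Icc x) (norm_coe_mem_Icc y) <| by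
      simpa only [hν.norm_smul_self] using congrArg norm hxy
  rw [hnorm] at hxy
  exact Subtype.ext (smul_right_injective V (hν.pos _ (norm_coe_mem_Icc y)).ne' hxy)

lemma map_surjective : Function.Surjective (hν.map V) := by
  intro y
  obtain ⟨r, hr, hry : r * ν r = ‖(y : V)‖⟩ : ‖(y : V)‖ ∈ (fun r => r * ν r) '' Icc 0 1 :=
    intermediate_value_Icc zero_le_one (continuous_id.mul hν.continuous).continuousOn
      (by simpa [hν.map_one] using norm_coe_mem_Icc y)
  rcases eq_or_ne (y : V) 0 with hy | hy
  · exact ⟨⟨0, by simp⟩, Subtype.ext (by simp [map, hy])⟩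
  have hy' : ‖(y : V)‖ ≠ 0 := norm_ne_zero_iff.mpr hy
  have hnorm : ‖(r / ‖(y : V)‖) • (y : V)‖ = r := by
    rw [norm_smul, Real.norm_of_nonneg (div_nonneg hr.1 (norm_nonneg _)), div_mul_cancel₀ _ hy']
  refine ⟨⟨(r / ‖(y : V)‖) • (y : V), mem_closedBall_zero_iff.mpr (hnorm.trans_le hr.2)⟩,
    Subtype.ext ?_⟩
  change ν ‖(r / ‖(y : V)‖) • (y : V)‖ • (r / ‖(y : V)‖) • (y : V) = y
  rw [hnorm, smul_smul, mul_div_assoc', mul_comm, hry, div_self hy', one_smul]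

variable (V) in
noncomputable def homeomorph [ProperSpace V] : 𝔹 ≃ₜ 𝔹 :=
  Continuous.homeoOfEquivCompactToT2
    (f := Equiv.ofBijective _ ⟨hν.map_injective, hν.map_surjective⟩)
    (((hν.continuous.comp (continuous_norm.comp continuous_subtype_val)).smul
      continuous_subtype_val).subtype_mk _)

@[simp]
lemma coe_homeomorph_apply [ProperSpace V] (x : 𝔹) :
    (hν.homeomorph V x : V) = ν ‖(x : V)‖ • (x : V) := rfl

lemma homeomorph_apply_of_norm_eq_one [ProperSpace V] {x : 𝔹} (hx : ‖(x : V)‖ = 1) :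
    hν.homeomorph V x = x :=
  Subtype.ext (by rw [coe_homeomorph_apply, hx, hν.map_one, one_smul])

variable (V) in
lemma norm_homeomorph_apply [ProperSpace V] (x : 𝔹) :
    ‖(hν.homeomorph V x : V)‖ = ‖(x : V)‖ * ν ‖(x : V)‖ :=
  hν.norm_smul_self x

end IsRadialProfile

lemma dist_smul_smul (a b : ℝ) (x : V) : dist (a • x) (b • x) = |a - b| * ‖x‖ := by
  rw [dist_eq_norm, ← sub_smul, norm_smul, Real.norm_eq_abs]

def profileInterp (ψ : ℝ → ℝ) (s r : ℝ) : ℝ := 1 - s * (1 - ψ r)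

section Interp

variable {ψ : ℝ → ℝ} (hψ : IsRadialProfile ψ)
include hψ

lemma isRadialProfile_profileInterp {s : ℝ} (hs : s ∈ Icc (0 : ℝ) 1) :
    IsRadialProfile (profileInterp ψ s) where
  continuous := continuous_const.sub (continuous_const.mul (continuous_const.sub hψ.continuous))
  pos r hr := by
    have := hψ.pos r hr
    have := hψ.le_one hr
    simp only [profileInterp]
    nlinarith [hs.1, hs.2]
  monotoneOn r hr r' hr' hrr' := by
    have := hψ.monotoneOn hr hr' hrr'
    simp only [profileInterp]
    nlinarith [hs.1]
  map_one := by simp [profileInterp, hψ.map_one]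

lemma dist_homeomorph_profileInterp_le [ProperSpace V] {s s' : ℝ}
    (hs : IsRadialProfile (profileInterp ψ s))
    (hs' : IsRadialProfile (profileInterp ψ s')) (x : 𝔹) :
    dist (hs.homeomorph V x) (hs'.homeomorph V x) ≤ |s - s'| := by
  have h₀ := hψ.pos _ (norm_coe_mem_Icc x)
  have h₁ := hψ.le_one (norm_coe_mem_Icc x)
  rw [Subtype.dist_eq, IsRadialProfile.coe_homeomorph_apply, IsRadialProfile.coe_homeomorph_apply,
    dist_smul_smul]
  calc |profileInterp ψ s ‖(x : V)‖ - profileInterp ψ s' ‖(x : V)‖| * ‖(x : V)‖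
      = |s - s'| * (1 - ψ ‖(x : V)‖) * ‖(x : V)‖ := by
        simp only [profileInterp]
        rw [show 1 - s * (1 - ψ ‖(x : V)‖) - (1 - s' * (1 - ψ ‖(x : V)‖))
          = -((s - s') * (1 - ψ ‖(x : V)‖)) by ring, abs_neg, abs_mul,
          abs_of_nonneg (by linarith : 0 ≤ 1 - ψ ‖(x : V)‖)]
    _ ≤ |s - s'| * 1 * 1 := by
        gcongr
        · linarith
        · exact norm_coe_le_one x
    _ = |s - s'| := by ring

end Interp

noncomputable def cutoffProfile (a t r : ℝ) : ℝ := max a ((r - t) / (1 - t))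

lemma isRadialProfile_cutoffProfile {a t : ℝ} (ha : 0 < a) (ha₁ : a ≤ 1) (ht : t < 1) :
    IsRadialProfile (cutoffProfile a t) where
  continuous := by unfold cutoffProfile; fun_prop
  pos r _ := ha.trans_le (le_max_left _ _)
  monotoneOn _ _ _ _ h := max_le_max le_rfl (div_le_div_of_nonneg_right (by linarith) (by linarith))
  map_one := by simp [cutoffProfile, div_self (sub_ne_zero.mpr ht.ne'), ha₁]

lemma cutoffProfile_of_le {a t r : ℝ} (ha : 0 ≤ a) (ht : t < 1) (hr : r ≤ t) :
    cutoffProfile a t r = a :=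
  max_eq_left (ha.trans' (div_nonpos_of_nonpos_of_nonneg (by linarith) (by linarith)))

noncomputable def ballRetraction (y : V) : 𝔹 :=
  ⟨(max 1 ‖y‖)⁻¹ • y, mem_closedBall_zero_iff.mpr <| by
    rw [norm_smul, Real.norm_of_nonneg (by positivity), inv_mul_le_one₀ (by positivity)]
    exact le_max_right _ _⟩

lemma continuous_ballRetraction : Continuous (ballRetraction (V := V)) :=
  ((continuous_const.max continuous_norm).inv₀ (fun _ => by positivity)).smul continuous_id
    |>.subtype_mk _

lemma ballRetraction_coe (x : 𝔹) : ballRetraction (x : V) = x :=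
  Subtype.ext (by simp [ballRetraction, max_eq_left (norm_coe_le_one x)])

-- The retraction only makes the first branch a total function of `y`.
noncomputable def extendByIdFun (h : 𝔹 → 𝔹) (y : V) : V :=
  if ‖y‖ ≤ 1 then h (ballRetraction y) else y

lemma extendByIdFun_coe (h : 𝔹 → 𝔹) (x : 𝔹) : extendByIdFun h x = h x := by
  simp [extendByIdFun, norm_coe_le_one x, ballRetraction_coe]

lemma extendByIdFun_of_one_lt (h : 𝔹 → 𝔹) {y : V} (hy : 1 < ‖y‖) : extendByIdFun h y = y :=
  if_neg hy.not_ge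

lemma extendByIdFun_of_one_le {h : 𝔹 → 𝔹} (hh : ∀ x ∈ ballBoundary V, h x = x) {y : V}
    (hy : 1 ≤ ‖y‖) : extendByIdFun h y = y := by
  rcases hy.eq_or_lt with hy | hy
  · lift y to 𝔹 using mem_closedBall_zero_iff.mpr hy.ge
    rw [extendByIdFun_coe, hh y hy.symm]
  · exact extendByIdFun_of_one_lt h hy

lemma continuous_extendByIdFun {h : 𝔹 → 𝔹} (hc : Continuous h)
    (hh : ∀ x ∈ ballBoundary V, h x = x) : Continuous (extendByIdFun h) :=
  (continuous_subtype_val.comp (hc.comp continuous_ballRetraction)).if_le continuous_id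
    continuous_norm continuous_const fun _ hy =>
      (if_pos hy.le).symm.trans (extendByIdFun_of_one_le hh hy.ge)

lemma extendByIdFun_leftInverse {h g : 𝔹 → 𝔹} (hgh : Function.LeftInverse g h) :
    Function.LeftInverse (extendByIdFun g) (extendByIdFun h) := by
  intro y
  by_cases hy : ‖y‖ ≤ 1
  · lift y to 𝔹 using mem_closedBall_zero_iff.mpr hy
    rw [extendByIdFun_coe, extendByIdFun_coe, hgh]
  · rw [extendByIdFun_of_one_lt h (not_le.mp hy), extendByIdFun_of_one_lt g (not_le.mp hy)]

noncomputable def Homeomorph.extendById (h : 𝔹 ≃ₜ 𝔹) (hh : ∀ x ∈ ballBoundary V, h x = x) :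
    V ≃ₜ V where
  toFun := extendByIdFun h
  invFun := extendByIdFun h.symm
  left_inv := extendByIdFun_leftInverse h.left_inv
  right_inv := extendByIdFun_leftInverse h.right_inv
  continuous_toFun := continuous_extendByIdFun h.continuous hh
  continuous_invFun :=
    continuous_extendByIdFun h.symm.continuous fun x hx => h.symm_apply_eq.mpr (hh x hx).symm

lemma dist_smul_self_le {s : ℝ} (hs : s ≤ 1) (w : 𝔹) : dist (s • (w : V)) w ≤ 1 - s := by
  calc dist (s • (w : V)) w = (1 - s) * ‖(w : V)‖ := by
        rw [← abs_of_nonneg (sub_nonneg.mpr hs), abs_sub_comm]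
        simpa using dist_smul_smul s 1 (w : V)
    _ ≤ 1 - s := mul_le_of_le_one_right (sub_nonneg.mpr hs) (norm_coe_le_one w)

lemma exists_eq_smul_of_norm_le {s : ℝ} (hs : 0 < s) {y : V} (hy : ‖y‖ ≤ s) :
    ∃ z : 𝔹, y = s • (z : V) := by
  refine ⟨⟨s⁻¹ • y, mem_closedBall_zero_iff.mpr ?_⟩, by simp [smul_smul, hs.ne']⟩
  rw [norm_smul, Real.norm_of_nonneg (inv_nonneg.mpr hs.le)]
  exact inv_mul_le_one_of_le₀ hy hs.le

noncomputable def alexanderConj (h : 𝔹 ≃ₜ 𝔹) (hh : ∀ x ∈ ballBoundary V, h x = x) {t : ℝ}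
    (ht : t ≠ 0) : V ≃ₜ V :=
  (Homeomorph.smulOfNeZero t⁻¹ (inv_ne_zero ht)).trans
    ((h.extendById hh).trans (Homeomorph.smulOfNeZero t ht))

section AlexanderTrick

variable {h : closedBall (0 : V) 1 ≃ₜ closedBall (0 : V) 1}
  {hh : ∀ x ∈ ballBoundary V, h x = x} {t : ℝ}

lemma alexanderConj_apply (ht : t ≠ 0) (y : V) :
    alexanderConj h hh ht y = t • extendByIdFun h (t⁻¹ • y) := rfl

lemma alexanderConj_smul (ht : t ≠ 0) (z : 𝔹) :
    alexanderConj h hh ht (t • (z : V)) = t • (h z : V) := by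
  rw [alexanderConj_apply, smul_smul, inv_mul_cancel₀ ht, one_smul]
  exact congrArg (t • ·) (extendByIdFun_coe h z)

lemma alexanderConj_apply_of_le_norm (ht : 0 < t) {y : V} (hy : t ≤ ‖y‖) :
    alexanderConj h hh ht.ne' y = y := by
  have : 1 ≤ ‖t⁻¹ • y‖ := by
    rw [norm_smul, Real.norm_of_nonneg (inv_nonneg.mpr ht.le)]
    exact (one_le_inv_mul₀ ht).mpr hy
  rw [alexanderConj_apply, extendByIdFun_of_one_le hh this, smul_smul, mul_inv_cancel₀ ht.ne',
    one_smul]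

lemma norm_alexanderConj_apply_le (ht : 0 < t) {y : V} (hy : ‖y‖ ≤ t) :
    ‖alexanderConj h hh ht.ne' y‖ ≤ t := by
  obtain ⟨z, rfl⟩ := exists_eq_smul_of_norm_le ht hy
  rw [alexanderConj_smul, norm_smul, Real.norm_of_nonneg ht.le]
  exact mul_le_of_le_one_right ht.le (norm_coe_le_one _)

variable (h hh) in
noncomputable def alexanderTrick (ht₀ : 0 < t) (ht₁ : t ≤ 1) : 𝔹 ≃ₜ 𝔹 :=
  (alexanderConj h hh ht₀.ne').subtype fun y => by
    simp only [mem_closedBall_zero_iff]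
    rcases le_total ‖y‖ t with hy | hy
    · exact iff_of_true (hy.trans ht₁) ((norm_alexanderConj_apply_le ht₀ hy).trans ht₁)
    · rw [alexanderConj_apply_of_le_norm ht₀ hy]

variable (ht₀ : 0 < t) (ht₁ : t ≤ 1)

lemma coe_alexanderTrick_apply (x : 𝔹) :
    (alexanderTrick h hh ht₀ ht₁ x : V) = alexanderConj h hh ht₀.ne' x := rfl

lemma alexanderTrick_apply_of_le_norm {x : 𝔹} (hx : t ≤ ‖(x : V)‖) :
    alexanderTrick h hh ht₀ ht₁ x = x :=
  Subtype.ext (alexanderConj_apply_of_le_norm ht₀ hx)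

lemma norm_alexanderTrick_apply_le {x : 𝔹} (hx : ‖(x : V)‖ ≤ t) :
    ‖(alexanderTrick h hh ht₀ ht₁ x : V)‖ ≤ t :=
  norm_alexanderConj_apply_le ht₀ hx

lemma exists_dist_le_and_dist_alexanderTrick_le (x : 𝔹) :
    ∃ z : 𝔹, dist x z ≤ 1 - t ∧ dist (h z) (alexanderTrick h hh ht₀ ht₁ x) ≤ 1 - t := by
  rcases le_total ‖(x : V)‖ t with hx | hx
  · obtain ⟨z, hz⟩ := exists_eq_smul_of_norm_le ht₀ hx
    refine ⟨z, ?_, ?_⟩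
    · rw [Subtype.dist_eq, hz]
      exact dist_smul_self_le ht₁ z
    · rw [Subtype.dist_eq, coe_alexanderTrick_apply, hz, alexanderConj_smul, dist_comm]
      exact dist_smul_self_le ht₁ (h z)
  · have hx₀ : 0 < ‖(x : V)‖ := ht₀.trans_le hx
    obtain ⟨z, hz⟩ := exists_eq_smul_of_norm_le hx₀ le_rfl
    have hz₁ : ‖(z : V)‖ = 1 := by
      have := congrArg norm hz
      rwa [norm_smul, norm_norm, eq_comm, mul_eq_left₀ hx₀.ne'] at this
    have hxz : dist x z ≤ 1 - t := by
      rw [Subtype.dist_eq, hz]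
      linarith [dist_smul_self_le (norm_coe_le_one x) z]
    refine ⟨z, hxz, ?_⟩
    rw [hh z hz₁, alexanderTrick_apply_of_le_norm ht₀ ht₁ hx, dist_comm]
    exact hxz

lemma dist_alexanderTrick_lt {ε : ℝ}
    (hδ : ∀ x y : 𝔹, dist x y ≤ 1 - t → dist (h x) (h y) < ε) (x : 𝔹) :
    dist (h x) (alexanderTrick h hh ht₀ ht₁ x) < ε + (1 - t) := by
  obtain ⟨z, hxz, hz⟩ := exists_dist_le_and_dist_alexanderTrick_le ht₀ ht₁ x
  calc dist (h x) (alexanderTrick h hh ht₀ ht₁ x)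
      ≤ dist (h x) (h z) + dist (h z) (alexanderTrick h hh ht₀ ht₁ x) := dist_triangle _ _ _
    _ < ε + (1 - t) := add_lt_add_of_lt_of_le (hδ x z hxz) hz

end AlexanderTrick

lemma exists_shrinking_factorsIntoSmall [ProperSpace V] {a t ε : ℝ} (ha : 0 < a) (ha₁ : a ≤ 1)
    (ht : t < 1) {m : ℕ} (hm : 1 < m * ε) :
    ∃ F : 𝔹 ≃ₜ 𝔹, (∀ x ∈ ballBoundary V, F x = x) ∧ (∀ x : 𝔹, ‖(x : V)‖ ≤ t → ‖(F x : V)‖ ≤ a) ∧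
      FactorsIntoSmall (ballBoundary V) ε m F ∧ FactorsIntoSmall (ballBoundary V) ε m F.symm := by
  have hm₀ : (0 : ℝ) < m := by
    rcases Nat.eq_zero_or_pos m with rfl | hm₀
    · norm_num at hm
    · exact_mod_cast hm₀
  have hψ := isRadialProfile_cutoffProfile ha ha₁ ht
  let F (j : Fin (m + 1)) : 𝔹 ≃ₜ 𝔹 :=
    (isRadialProfile_profileInterp hψ (s := j / m)
      ⟨by positivity, div_le_one_of_le₀ (mod_cast j.is_le) hm₀.le⟩).homeomorph V
  have hF_fix (j : Fin (m + 1)) : ∀ x ∈ ballBoundary V, F j x = x := fun _ hx =>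
    IsRadialProfile.homeomorph_apply_of_norm_eq_one _ hx
  have hF_succ (j : Fin m) (x : 𝔹) : dist (F j.succ x) (F j.castSucc x) < ε := by
    refine (dist_homeomorph_profileInterp_le hψ _ _ x).trans_lt ?_
    rw [Fin.val_succ, Fin.val_castSucc, Nat.cast_succ, ← sub_div, add_sub_cancel_left,
      abs_of_pos (by positivity), div_lt_iff₀ hm₀]
    linarith
  have hF₀ : F 0 = Homeomorph.refl 𝔹 := by
    ext x
    simp [F, profileInterp]
  refine ⟨F (Fin.last m), hF_fix _, fun x hx => ?_, ?_, ?_⟩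
  · rw [IsRadialProfile.norm_homeomorph_apply]
    simp only [Fin.val_last, div_self hm₀.ne', profileInterp, one_mul, sub_sub_cancel,
      cutoffProfile_of_le ha.le ht hx]
    exact mul_le_of_le_one_left ha.le (norm_coe_le_one x)
  · convert factorsIntoSmall_of_chain F hF_fix hF_succ using 1
    ext
    simp [hF₀]
  · convert factorsIntoSmall_of_chain (F ∘ Fin.rev) (fun _ => hF_fix _)
      (fun j x => by simpa [dist_comm, Fin.rev_succ, Fin.rev_castSucc] using hF_succ j.rev x)
      using 1
    ext
    simp [hF₀]

omit [NormedSpace ℝ V] in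
lemma dist_apply_apply_le_of_mapsTo {f k : 𝔹 → 𝔹} {a t : ℝ} (ha : 0 ≤ a)
    (hf : ∀ x : 𝔹, ‖(x : V)‖ ≤ t → ‖(f x : V)‖ ≤ a)
    (hk : ∀ x : 𝔹, ‖(x : V)‖ ≤ t → ‖(k x : V)‖ ≤ t) (hk' : ∀ x : 𝔹, t ≤ ‖(x : V)‖ → k x = x)
    (x : 𝔹) : dist (f (k x)) (f x) ≤ 2 * a := by
  rcases le_total ‖(x : V)‖ t with hx | hx
  · calc dist (f (k x)) (f x) ≤ ‖(f (k x) : V)‖ + ‖(f x : V)‖ := dist_le_norm_add_norm _ _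
      _ ≤ 2 * a := by linarith [hf _ (hk x hx), hf x hx]
  · rw [hk' x hx, dist_self]
    positivity

theorem factorsIntoSmall_of_fixes_boundary [ProperSpace V] {ε : ℝ} {m : ℕ} (hm : 1 < m * ε)
    (h : 𝔹 ≃ₜ 𝔹) (hh : ∀ x ∈ ballBoundary V, h x = x) :
    FactorsIntoSmall (ballBoundary V) ε (m + 1 + m + 1) h := by
  have hε : 0 < ε := pos_of_mul_pos_right (one_pos.trans hm) m.cast_nonneg
  obtain ⟨δ, hδ₀, hδ⟩ := Metric.uniformContinuous_iff.mp
    (CompactSpace.uniformContinuous_of_continuous h.continuous) (ε / 2) (half_pos hε)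
  obtain ⟨t, ht₀, ht₁, htδ, htε⟩ : ∃ t : ℝ, 0 < t ∧ t < 1 ∧ 1 - t < δ ∧ 1 - t ≤ ε / 2 :=
    ⟨1 - min (min δ ε) 1 / 2, by grind, by grind, by grind, by grind⟩
  obtain ⟨F, hF_fix, hF_shrink, hF, hF_symm⟩ :=
    exists_shrinking_factorsIntoSmall (V := V) (a := min (ε / 3) 1) (by positivity)
      (min_le_right _ _) ht₁ hm
  set k := alexanderTrick h hh ht₀ ht₁.le
  have hk_fix : ∀ x ∈ ballBoundary V, k x = x := fun x hx =>
    alexanderTrick_apply_of_le_norm ht₀ ht₁.le (hx.symm ▸ ht₁.le)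
  have hconj : FactorsIntoSmall (ballBoundary V) ε 1 (F.symm.trans (k.trans F)) :=
    factorsIntoSmall_symm_trans hF_fix (fun x hx => by simp [hk_fix x hx, hF_fix x hx]) fun x =>
      (dist_apply_apply_le_of_mapsTo (by positivity) hF_shrink
        (fun _ => norm_alexanderTrick_apply_le ht₀ ht₁.le)
        (fun _ => alexanderTrick_apply_of_le_norm ht₀ ht₁.le) x).trans_lt (by grind)
  have hk : FactorsIntoSmall (ballBoundary V) ε 1 (k.symm.trans h) :=
    factorsIntoSmall_symm_trans hk_fix hh fun x => by
      have := dist_alexanderTrick_lt (hh := hh) ht₀ ht₁.le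
        (fun x y hxy => hδ (hxy.trans_lt htδ)) x
      linarith
  convert ((hF.trans hconj).trans hF_symm).trans hk using 1
  ext
  simp

/-- Every homeomorphism of the closed disc fixing the boundary pointwise is a
composition of N boundary-fixing homeomorphisms ε-close to the identity,
with N ≤ 4/ε + 4. -/
theorem stmt_9 (ε : ℝ) (hε : 0 < ε) :
    ∃ N : ℕ, (N : ℝ) ≤ 4 / ε + 4 ∧
      ∀ h : (Metric.closedBall (0 : EuclideanSpace ℝ (Fin 2)) 1) ≃ₜ
            (Metric.closedBall (0 : EuclideanSpace ℝ (Fin 2)) 1),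
        (∀ x : Metric.closedBall (0 : EuclideanSpace ℝ (Fin 2)) 1,
          ‖(x : EuclideanSpace ℝ (Fin 2))‖ = 1 → h x = x) →
        ∃ g : Fin N → ((Metric.closedBall (0 : EuclideanSpace ℝ (Fin 2)) 1) ≃ₜ
            (Metric.closedBall (0 : EuclideanSpace ℝ (Fin 2)) 1)),
          (∀ i, (∀ x : Metric.closedBall (0 : EuclideanSpace ℝ (Fin 2)) 1,
              ‖(x : EuclideanSpace ℝ (Fin 2))‖ = 1 → g i x = x) ∧
            ∀ x : Metric.closedBall (0 : EuclideanSpace ℝ (Fin 2)) 1,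
              dist ((g i x : EuclideanSpace ℝ (Fin 2))) (x : EuclideanSpace ℝ (Fin 2)) < ε) ∧
          ⇑h = (List.ofFn fun i => ⇑(g i)).foldl (fun acc f => f ∘ acc) id := by
  set m := ⌊1 / ε⌋₊ + 1
  have hm : 1 < m * ε := by
    have := Nat.lt_floor_add_one (1 / ε)
    rw [div_lt_iff₀ hε] at this
    exact_mod_cast this
  refine ⟨m + 1 + m + 1, ?_, fun h hh => factorsIntoSmall_of_fixes_boundary hm h hh⟩
  have hfloor := Nat.floor_le (one_div_nonneg.mpr hε.le)
  have hinv : 0 < 1 / ε := one_div_pos.mpr hε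
  have : 4 / ε = 4 * (1 / ε) := by ring
  push_cast [m]
  linarith
end

section
/- Let α ∈ ]p/q, p'/q'[ where ]p/q, p'/q'[ is a Farey interval. Consider on the circle ℝ/ℤ the points 0, α, 2α, …, (q+q'−1)α. Then these q+q' points are pairwise distinct, and their cyclic order on ℝ/ℤ is the same for every choice of α in the Farey interval: for any k₁, k₂, k₃ ∈ {0, …, q+q'−1} and any α, β in the interval, the triple (k₁α mod 1, k₂α mod 1, k₃α mod 1) is positively cyclically ordered if and only if (k₁β mod 1, k₂β mod 1, k₃β mod 1) is. -/
private lemma keylt {p q p' q' : ℤ} (hq : 0 < q) (hq' : 0 < q')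
    (hF : p' * q - p * q' = 1) {j m : ℤ} (hj : 0 < j) (hjlt : j < q + q')
    (h1 : (p:ℝ)/q < (m:ℝ)/j) (h2 : (m:ℝ)/j < (p':ℝ)/q') : False := by
  have hqR : (0:ℝ) < q := by exact_mod_cast hq
  have hq'R : (0:ℝ) < q' := by exact_mod_cast hq'
  have hjR : (0:ℝ) < j := by exact_mod_cast hj
  have A : (p:ℝ) * j < m * q := by rwa [div_lt_div_iff₀ hqR hjR] at h1
  have B : (m:ℝ) * q' < p' * j := by rwa [div_lt_div_iff₀ hjR hq'R] at h2
  have A' : p * j < m * q := by exact_mod_cast A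
  have B' : m * q' < p' * j := by exact_mod_cast B
  have hA : 1 ≤ m * q - p * j := by linarith [Int.lt_iff_add_one_le.mp A']
  have hB : 1 ≤ p' * j - m * q' := by linarith [Int.lt_iff_add_one_le.mp B']
  have key : q' * (m * q - p * j) + q * (p' * j - m * q') = j := by
    linear_combination j * hF
  have t1 := mul_le_mul_of_nonneg_left hA hq'.le
  have t2 := mul_le_mul_of_nonneg_left hB hq.le
  linarith

/-- jα is never an integer for 0 < |j| < q+q'. -/
private lemma nonint {p q p' q' : ℤ} (hq : 0 < q) (hq' : 0 < q')
    (hF : p' * q - p * q' = 1) {α : ℝ}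
    (hα : α ∈ Set.Ioo ((p:ℝ)/q) ((p':ℝ)/q'))
    {j m : ℤ} (hj : j ≠ 0) (hjlt : |j| < q + q')
    (h : (j:ℝ) * α = m) : False := by
  have hb := abs_lt.mp hjlt
  have hjR : (j:ℝ) ≠ 0 := Int.cast_ne_zero.mpr hj
  have hαe : α = (m:ℝ)/j := by
    rw [eq_div_iff hjR]; linear_combination h
  obtain ⟨h1, h2⟩ := hα
  rw [hαe] at h1 h2
  rcases hj.lt_or_gt with hneg | hpos
  · have hmj : (m:ℝ)/j = (((-m : ℤ)):ℝ)/(((-j : ℤ)):ℝ) := by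
      push_cast; rw [neg_div_neg_eq]
    rw [hmj] at h1 h2
    exact keylt hq hq' hF (by omega : (0:ℤ) < -j) (by omega) h1 h2
  · exact keylt hq hq' hF hpos hb.2 h1 h2

/-- No "integer crossing" m/j lies between two points of the interval. -/
private lemma between {p q p' q' : ℤ} (hq : 0 < q) (hq' : 0 < q')
    (hF : p' * q - p * q' = 1) {α β : ℝ}
    (hα : α ∈ Set.Ioo ((p:ℝ)/q) ((p':ℝ)/q'))
    (hβ : β ∈ Set.Ioo ((p:ℝ)/q) ((p':ℝ)/q'))
    {j m : ℤ} (hj : j ≠ 0) (hjlt : |j| < q + q')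
    (h1 : (j:ℝ) * α < m) (h2 : (m:ℝ) < j * β) : False := by
  have hjR : (j:ℝ) ≠ 0 := Int.cast_ne_zero.mpr hj
  have hmul : (j:ℝ) * ((m:ℝ)/j) = m := by field_simp
  rcases hj.lt_or_gt with hneg | hpos
  · have hjRn : (j:ℝ) < 0 := by exact_mod_cast hneg
    have hga : (m:ℝ)/j < α := by
      rw [div_lt_iff_of_neg hjRn]; nlinarith
    have hgb : β < (m:ℝ)/j := by
      rw [lt_div_iff_of_neg hjRn]; nlinarith
    exact nonint hq hq' hF ⟨hβ.1.trans hgb, hga.trans hα.2⟩ hj hjlt hmul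
  · have hjRp : (0:ℝ) < j := by exact_mod_cast hpos
    have hga : α < (m:ℝ)/j := by
      rw [lt_div_iff₀ hjRp]; nlinarith
    have hgb : (m:ℝ)/j < β := by
      rw [div_lt_iff₀ hjRp]; nlinarith
    exact nonint hq hq' hF ⟨hα.1.trans hga, hgb.trans hβ.2⟩ hj hjlt hmul

/-- ⌊jα⌋ is constant on the Farey interval. -/
private lemma floor_const {p q p' q' : ℤ} (hq : 0 < q) (hq' : 0 < q')
    (hF : p' * q - p * q' = 1) {α β : ℝ}
    (hα : α ∈ Set.Ioo ((p:ℝ)/q) ((p':ℝ)/q'))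
    (hβ : β ∈ Set.Ioo ((p:ℝ)/q) ((p':ℝ)/q'))
    {j : ℤ} (hj : j ≠ 0) (hjlt : |j| < q + q') :
    ⌊(j:ℝ) * α⌋ = ⌊(j:ℝ) * β⌋ := by
  by_contra hne
  rcases lt_or_gt_of_ne hne with hlt | hlt
  · refine between hq hq' hF hα hβ hj hjlt (m := ⌊(j:ℝ)*β⌋) ?_ ?_
    · have t1 := Int.lt_floor_add_one ((j:ℝ)*α)
      have t2 : ((⌊(j:ℝ)*α⌋ : ℝ) + 1) ≤ (⌊(j:ℝ)*β⌋ : ℝ) := by exact_mod_cast hlt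
      linarith
    · exact lt_of_le_of_ne (Int.floor_le _)
        (fun h => nonint hq hq' hF hβ hj hjlt h.symm)
  · refine between hq hq' hF hβ hα hj hjlt (m := ⌊(j:ℝ)*α⌋) ?_ ?_
    · have t1 := Int.lt_floor_add_one ((j:ℝ)*β)
      have t2 : ((⌊(j:ℝ)*β⌋ : ℝ) + 1) ≤ (⌊(j:ℝ)*α⌋ : ℝ) := by exact_mod_cast hlt
      linarith
    · exact lt_of_le_of_ne (Int.floor_le _)
        (fun h => nonint hq hq' hF hα hj hjlt h.symm)

/-- The points 0, α, …, (q+q'−1)α of ℝ/ℤ are pairwise distinct, and their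
cyclic order (encoded via fractional parts of differences) is the same for all
α in the Farey interval ]p/q, p'/q'[. -/
theorem stmt_17 (p q p' q' : ℤ) (hq : 0 < q) (hq' : 0 < q')
    (hpq : Int.gcd p q = 1) (hp'q' : Int.gcd p' q' = 1)
    (hFarey : p' * q - p * q' = 1) :
    ∀ α ∈ Set.Ioo ((p : ℝ) / q) ((p' : ℝ) / q'),
    ∀ β ∈ Set.Ioo ((p : ℝ) / q) ((p' : ℝ) / q'),
      (∀ k₁ k₂ : ℕ, (k₁ : ℤ) < q + q' → (k₂ : ℤ) < q + q' → k₁ ≠ k₂ →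
        Int.fract ((k₁ : ℝ) * α) ≠ Int.fract ((k₂ : ℝ) * α)) ∧
      (∀ k₁ k₂ k₃ : ℕ, (k₁ : ℤ) < q + q' → (k₂ : ℤ) < q + q' →
        (k₃ : ℤ) < q + q' → k₁ ≠ k₂ → k₂ ≠ k₃ → k₁ ≠ k₃ →
        (Int.fract ((k₂ : ℝ) * α - (k₁ : ℝ) * α) <
            Int.fract ((k₃ : ℝ) * α - (k₁ : ℝ) * α) ↔
          Int.fract ((k₂ : ℝ) * β - (k₁ : ℝ) * β) <
            Int.fract ((k₃ : ℝ) * β - (k₁ : ℝ) * β))) := by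
  intro α hα β hβ
  constructor
  · intro k₁ k₂ hk₁ hk₂ hne heq
    have hneZ : (k₁ : ℤ) ≠ (k₂ : ℤ) := by exact_mod_cast hne
    refine nonint hq hq' hFarey hα (j := (k₁:ℤ) - k₂)
      (m := ⌊(k₁:ℝ)*α⌋ - ⌊(k₂:ℝ)*α⌋) (by omega) (by rw [abs_lt]; omega) ?_
    simp only [Int.fract] at heq
    push_cast
    linarith
  · intro k₁ k₂ k₃ hk₁ hk₂ hk₃ h12 h23 h13
    have h12Z : (k₂ : ℤ) - k₁ ≠ 0 := by
      have : (k₁ : ℤ) ≠ (k₂ : ℤ) := by exact_mod_cast h12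
      omega
    have h13Z : (k₃ : ℤ) - k₁ ≠ 0 := by
      have : (k₁ : ℤ) ≠ (k₃ : ℤ) := by exact_mod_cast h13
      omega
    have h23Z : ((k₂ : ℤ) - k₁) - ((k₃ : ℤ) - k₁) ≠ 0 := by
      have : (k₂ : ℤ) ≠ (k₃ : ℤ) := by exact_mod_cast h23
      omega
    set a : ℤ := (k₂ : ℤ) - k₁ with ha
    set b : ℤ := (k₃ : ℤ) - k₁ with hb
    have halt : |a| < q + q' := by rw [abs_lt]; omega
    have hblt : |b| < q + q' := by rw [abs_lt]; omega
    have hdlt : |a - b| < q + q' := by rw [abs_lt]; omega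
    have ea : (k₂:ℝ)*α - (k₁:ℝ)*α = (a:ℝ)*α := by push_cast [ha]; ring
    have eb : (k₃:ℝ)*α - (k₁:ℝ)*α = (b:ℝ)*α := by push_cast [hb]; ring
    have ea' : (k₂:ℝ)*β - (k₁:ℝ)*β = (a:ℝ)*β := by push_cast [ha]; ring
    have eb' : (k₃:ℝ)*β - (k₁:ℝ)*β = (b:ℝ)*β := by push_cast [hb]; ring
    have hca : ⌊(a:ℝ)*β⌋ = ⌊(a:ℝ)*α⌋ :=
      (floor_const hq hq' hFarey hα hβ h12Z halt).symm
    have hcb : ⌊(b:ℝ)*β⌋ = ⌊(b:ℝ)*α⌋ :=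
      (floor_const hq hq' hFarey hα hβ h13Z hblt).symm
    rw [ea, eb, ea', eb']
    simp only [Int.fract, hca, hcb]
    set ca : ℤ := ⌊(a:ℝ)*α⌋
    set cb : ℤ := ⌊(b:ℝ)*α⌋
    constructor
    · intro h
      by_contra h'
      push_neg at h'
      have hne2 : (b:ℝ)*β - cb ≠ (a:ℝ)*β - ca := by
        intro he
        refine nonint hq hq' hFarey hβ (j := a - b) (m := ca - cb) h23Z hdlt ?_
        push_cast
        linarith
      have h'' : (b:ℝ)*β - cb < (a:ℝ)*β - ca := lt_of_le_of_ne h' hne2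
      refine between hq hq' hFarey hα hβ (j := a - b) (m := ca - cb) h23Z hdlt
        (by push_cast; linarith) (by push_cast; linarith)
    · intro h
      by_contra h'
      push_neg at h'
      have hne2 : (b:ℝ)*α - cb ≠ (a:ℝ)*α - ca := by
        intro he
        refine nonint hq hq' hFarey hα (j := a - b) (m := ca - cb) h23Z hdlt ?_
        push_cast
        linarith
      have h'' : (b:ℝ)*α - cb < (a:ℝ)*α - ca := lt_of_le_of_ne h' hne2
      refine between hq hq' hFarey hβ hα (j := a - b) (m := ca - cb) h23Z hdlt
        (by push_cast; linarith) (by push_cast; linarith)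
end
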